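/- The matrices A₁, B₁, A₂, B₂, C (and their inverses) generate the symplectic group Sp₄(ℤ), where A₁ = diag([[1,1],[0,1]], I₂), B₁ = diag([[1,0],[1,1]], I₂), A₂ = diag(I₂, [[1,1],[0,1]]), B₂ = diag(I₂, [[1,0],[1,1]]), and C has rows (1,0,0,0), (0,1,0,1), (-1,0,1,0), (0,0,0,1). -/

import Mathlib

open Matrix

/-- The standard symplectic form on `ℤ⁴`: block-diagonal with two blocks `J = [[0,1],[-1,0]]`. -/
def Omega4 : Matrix (Fin 4) (Fin 4) ℤ :=
  !![0, 1, 0, 0; -1, 0, 0, 0; 0, 0, 0, 1; 0, 0, -1, 0]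

def A1 : Matrix (Fin 4) (Fin 4) ℤ := !![1, 1, 0, 0; 0, 1, 0, 0; 0, 0, 1, 0; 0, 0, 0, 1]
def B1 : Matrix (Fin 4) (Fin 4) ℤ := !![1, 0, 0, 0; 1, 1, 0, 0; 0, 0, 1, 0; 0, 0, 0, 1]
def A2 : Matrix (Fin 4) (Fin 4) ℤ := !![1, 0, 0, 0; 0, 1, 0, 0; 0, 0, 1, 1; 0, 0, 0, 1]
def B2 : Matrix (Fin 4) (Fin 4) ℤ := !![1, 0, 0, 0; 0, 1, 0, 0; 0, 0, 1, 0; 0, 0, 1, 1]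
def Cmat : Matrix (Fin 4) (Fin 4) ℤ := !![1, 0, 0, 0; 0, 1, 0, 1; -1, 0, 1, 0; 0, 0, 0, 1]

def A1inv : Matrix (Fin 4) (Fin 4) ℤ := !![1, -1, 0, 0; 0, 1, 0, 0; 0, 0, 1, 0; 0, 0, 0, 1]
def B1inv : Matrix (Fin 4) (Fin 4) ℤ := !![1, 0, 0, 0; -1, 1, 0, 0; 0, 0, 1, 0; 0, 0, 0, 1]
def A2inv : Matrix (Fin 4) (Fin 4) ℤ := !![1, 0, 0, 0; 0, 1, 0, 0; 0, 0, 1, -1; 0, 0, 0, 1]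
def B2inv : Matrix (Fin 4) (Fin 4) ℤ := !![1, 0, 0, 0; 0, 1, 0, 0; 0, 0, 1, 0; 0, 0, -1, 1]
def Cinv : Matrix (Fin 4) (Fin 4) ℤ := !![1, 0, 0, 0; 0, 1, 0, -1; 1, 0, 1, 0; 0, 0, 0, 1]

namespace Sp4Aux

def GenSet : Set (Matrix (Fin 4) (Fin 4) ℤ) :=
  {A1, A1inv, B1, B1inv, A2, A2inv, B2, B2inv, Cmat, Cinv}

abbrev G : Submonoid (Matrix (Fin 4) (Fin 4) ℤ) := Submonoid.closure GenSet

lemma sp_of_mem {M : Matrix (Fin 4) (Fin 4) ℤ} (hM : M ∈ G) :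
    Mᵀ * Omega4 * M = Omega4 := by
  induction hM using Submonoid.closure_induction with
  | mem x hx =>
      simp only [GenSet, Set.mem_insert_iff, Set.mem_singleton_iff] at hx
      rcases hx with rfl|rfl|rfl|rfl|rfl|rfl|rfl|rfl|rfl|rfl <;> decide
  | one => simp
  | mul x y hx hy ihx ihy =>
      have h : (x*y)ᵀ * Omega4 * (x*y) = yᵀ * (xᵀ * Omega4 * x) * y := by
        rw [transpose_mul]; noncomm_ring
      rw [h, ihx, ihy]

lemma exists_inv {M : Matrix (Fin 4) (Fin 4) ℤ} (hM : M ∈ G) :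
    ∃ N, N ∈ G ∧ N * M = 1 ∧ M * N = 1 := by
  induction hM using Submonoid.closure_induction with
  | mem x hx =>
      have mm : ∀ y ∈ GenSet, y ∈ G := fun y hy => Submonoid.subset_closure hy
      simp only [GenSet, Set.mem_insert_iff, Set.mem_singleton_iff] at hx
      rcases hx with rfl|rfl|rfl|rfl|rfl|rfl|rfl|rfl|rfl|rfl
      · exact ⟨A1inv, mm _ (by simp [GenSet]), by decide, by decide⟩
      · exact ⟨A1, mm _ (by simp [GenSet]), by decide, by decide⟩
      · exact ⟨B1inv, mm _ (by simp [GenSet]), by decide, by decide⟩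
      · exact ⟨B1, mm _ (by simp [GenSet]), by decide, by decide⟩
      · exact ⟨A2inv, mm _ (by simp [GenSet]), by decide, by decide⟩
      · exact ⟨A2, mm _ (by simp [GenSet]), by decide, by decide⟩
      · exact ⟨B2inv, mm _ (by simp [GenSet]), by decide, by decide⟩
      · exact ⟨B2, mm _ (by simp [GenSet]), by decide, by decide⟩
      · exact ⟨Cinv, mm _ (by simp [GenSet]), by decide, by decide⟩
      · exact ⟨Cmat, mm _ (by simp [GenSet]), by decide, by decide⟩
  | one => exact ⟨1, one_mem _, by simp, by simp⟩
  | mul x y hx hy ihx ihy =>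
      obtain ⟨nx, hnx, hnx1, hnx2⟩ := ihx
      obtain ⟨ny, hny, hny1, hny2⟩ := ihy
      refine ⟨ny * nx, mul_mem hny hnx, ?_, ?_⟩
      · rw [mul_assoc, ← mul_assoc nx, hnx1, one_mul, hny1]
      · rw [mul_assoc, ← mul_assoc y, hny2, one_mul, hnx2]

end Sp4Aux

namespace Sp4Aux

def T2 : Matrix (Fin 2) (Fin 2) ℤ := !![1, 1; 0, 1]
def T2i : Matrix (Fin 2) (Fin 2) ℤ := !![1, -1; 0, 1]
def L2 : Matrix (Fin 2) (Fin 2) ℤ := !![1, 0; 1, 1]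
def L2i : Matrix (Fin 2) (Fin 2) ℤ := !![1, 0; -1, 1]
def S2x2 : Matrix (Fin 2) (Fin 2) ℤ := !![0, 1; -1, 0]

def Gen2 : Set (Matrix (Fin 2) (Fin 2) ℤ) := {T2, T2i, L2, L2i}

abbrev G2 : Submonoid (Matrix (Fin 2) (Fin 2) ℤ) := Submonoid.closure Gen2

def zT (k : ℤ) : Matrix (Fin 2) (Fin 2) ℤ := !![1, k; 0, 1]

lemma zT_mem (k : ℤ) : zT k ∈ G2 := by
  induction k using Int.induction_on with
  | zero => rw [show zT 0 = 1 by decide]; exact one_mem _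
  | succ n ih =>
      have h : zT (n + 1) = zT n * T2 := by
        ext i j
        fin_cases i <;> fin_cases j <;>
          simp [zT, T2, Matrix.mul_apply, Fin.sum_univ_two] <;> ring
      rw [h]; exact mul_mem ih (Submonoid.subset_closure (by simp [Gen2]))
  | pred n ih =>
      have h : zT (-n - 1) = zT (-n) * T2i := by
        ext i j
        fin_cases i <;> fin_cases j <;>
          simp [zT, T2i, Matrix.mul_apply, Fin.sum_univ_two] <;> ring
      rw [h]; exact mul_mem ih (Submonoid.subset_closure (by simp [Gen2]))

lemma S2x2_mem : S2x2 ∈ G2 := by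
  rw [show S2x2 = T2 * L2i * T2 by decide]
  exact mul_mem (mul_mem (Submonoid.subset_closure (by simp [Gen2]))
    (Submonoid.subset_closure (by simp [Gen2]))) (Submonoid.subset_closure (by simp [Gen2]))

lemma negone_mem : (-1 : Matrix (Fin 2) (Fin 2) ℤ) ∈ G2 := by
  rw [show (-1 : Matrix (Fin 2) (Fin 2) ℤ) = S2x2 * S2x2 by decide]
  exact mul_mem S2x2_mem S2x2_mem

lemma zT_mulVec (k a b : ℤ) : (zT k).mulVec ![a, b] = ![a + k * b, b] := by
  funext i
  fin_cases i <;> simp [zT, Matrix.mulVec, dotProduct, Fin.sum_univ_two]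

lemma S2x2_mulVec (a b : ℤ) : S2x2.mulVec ![a, b] = ![b, -a] := by
  funext i
  fin_cases i <;> simp [S2x2, Matrix.mulVec, dotProduct, Fin.sum_univ_two]

lemma negone_mulVec (a b : ℤ) :
    (-1 : Matrix (Fin 2) (Fin 2) ℤ).mulVec ![a, b] = ![-a, -b] := by
  funext i
  fin_cases i <;> simp [Matrix.mulVec, dotProduct, Fin.sum_univ_two, Matrix.one_apply]

lemma emod_natAbs_lt (a b : ℤ) (hb : b ≠ 0) : (a % b).natAbs < b.natAbs := by
  have h0 : 0 ≤ a % b := Int.emod_nonneg a hb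
  have h1 : a % b < (b.natAbs : ℤ) := by
    rcases hb.lt_or_gt with h | h
    · have h2 := Int.emod_lt_of_pos a (show (0:ℤ) < -b by omega)
      rw [Int.emod_neg] at h2; omega
    · have h2 := Int.emod_lt_of_pos a h; omega
  omega

lemma gcd_step (a b : ℤ) : Int.gcd b (a % b) = Int.gcd a b := by
  apply Nat.dvd_antisymm
  · have h1 : (↑(Int.gcd b (a % b)) : ℤ) ∣ a := by
      have he : b * (a / b) + a % b = a := Int.mul_ediv_add_emod a b
      have h2 : (↑(Int.gcd b (a % b)) : ℤ) ∣ b * (a / b) + a % b :=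
        dvd_add (Dvd.dvd.mul_right (Int.gcd_dvd_left _ _) _) (Int.gcd_dvd_right _ _)
      rwa [he] at h2
    exact Int.natCast_dvd_natCast.mp (Int.dvd_coe_gcd h1 ((Int.gcd_dvd_left _ _)))
  · have h1 : (↑(Int.gcd a b) : ℤ) ∣ a % b := by
      rw [Int.emod_def]
      exact dvd_sub ((Int.gcd_dvd_left _ _)) (Dvd.dvd.mul_right ((Int.gcd_dvd_right _ _)) _)
    exact Int.natCast_dvd_natCast.mp (Int.dvd_coe_gcd ((Int.gcd_dvd_right _ _)) h1)

lemma gcd_neg_right (a b : ℤ) : Int.gcd a (-b) = Int.gcd a b := by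
  simp [Int.gcd_def]

lemma euclid2 : ∀ n : ℕ, ∀ a b : ℤ, b.natAbs ≤ n →
    ∃ R ∈ G2, R.mulVec ![a, b] = ![(Int.gcd a b : ℤ), 0] := by
  intro n
  induction n with
  | zero =>
      intro a b hb
      have hb0 : b = 0 := by omega
      subst hb0
      rcases le_or_gt 0 a with h | h
      · refine ⟨1, one_mem _, ?_⟩
        rw [Matrix.one_mulVec]
        have : ((Int.gcd a 0 : ℕ) : ℤ) = a := by rw [Int.gcd_zero_right]; omega
        rw [this]
      · refine ⟨-1, negone_mem, ?_⟩
        rw [negone_mulVec]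
        have : ((Int.gcd a 0 : ℕ) : ℤ) = -a := by rw [Int.gcd_zero_right]; omega
        rw [this]; norm_num
  | succ n ih =>
      intro a b hb
      by_cases hb0 : b = 0
      · subst hb0
        rcases le_or_gt 0 a with h | h
        · refine ⟨1, one_mem _, ?_⟩
          rw [Matrix.one_mulVec]
          have : ((Int.gcd a 0 : ℕ) : ℤ) = a := by rw [Int.gcd_zero_right]; omega
          rw [this]
        · refine ⟨-1, negone_mem, ?_⟩
          rw [negone_mulVec]
          have : ((Int.gcd a 0 : ℕ) : ℤ) = -a := by rw [Int.gcd_zero_right]; omega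
          rw [this]; norm_num
      · obtain ⟨R, hR, hRv⟩ := ih b (-(a % b))
          (by have := emod_natAbs_lt a b hb0; simp only [Int.natAbs_neg]; omega)
        refine ⟨R * (S2x2 * zT (-(a / b))), mul_mem hR (mul_mem S2x2_mem (zT_mem _)), ?_⟩
        rw [← Matrix.mulVec_mulVec, ← Matrix.mulVec_mulVec, zT_mulVec,
          show a + -(a / b) * b = a % b by rw [Int.emod_def]; ring,
          S2x2_mulVec, hRv, gcd_neg_right, gcd_step]

end Sp4Aux

namespace Sp4Aux

def emb1 (R : Matrix (Fin 2) (Fin 2) ℤ) : Matrix (Fin 4) (Fin 4) ℤ :=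
  !![R 0 0, R 0 1, 0, 0; R 1 0, R 1 1, 0, 0; 0, 0, 1, 0; 0, 0, 0, 1]

def emb2 (R : Matrix (Fin 2) (Fin 2) ℤ) : Matrix (Fin 4) (Fin 4) ℤ :=
  !![1, 0, 0, 0; 0, 1, 0, 0; 0, 0, R 0 0, R 0 1; 0, 0, R 1 0, R 1 1]

lemma emb1_mul (R S : Matrix (Fin 2) (Fin 2) ℤ) : emb1 (R * S) = emb1 R * emb1 S := by
  ext i j
  fin_cases i <;> fin_cases j <;>
    simp [emb1, Matrix.mul_apply, Fin.sum_univ_four, Fin.sum_univ_two, Matrix.vecHead, Matrix.vecTail]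

lemma emb2_mul (R S : Matrix (Fin 2) (Fin 2) ℤ) : emb2 (R * S) = emb2 R * emb2 S := by
  ext i j
  fin_cases i <;> fin_cases j <;>
    simp [emb2, Matrix.mul_apply, Fin.sum_univ_four, Fin.sum_univ_two, Matrix.vecHead, Matrix.vecTail]

lemma emb1_mem {R : Matrix (Fin 2) (Fin 2) ℤ} (hR : R ∈ G2) : emb1 R ∈ G := by
  induction hR using Submonoid.closure_induction with
  | mem x hx =>
      simp only [Gen2, Set.mem_insert_iff, Set.mem_singleton_iff] at hx
      rcases hx with rfl|rfl|rfl|rfl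
      · exact Submonoid.subset_closure (show emb1 T2 ∈ GenSet by
          rw [show emb1 T2 = A1 by decide]; simp [GenSet])
      · exact Submonoid.subset_closure (show emb1 T2i ∈ GenSet by
          rw [show emb1 T2i = A1inv by decide]; simp [GenSet])
      · exact Submonoid.subset_closure (show emb1 L2 ∈ GenSet by
          rw [show emb1 L2 = B1 by decide]; simp [GenSet])
      · exact Submonoid.subset_closure (show emb1 L2i ∈ GenSet by
          rw [show emb1 L2i = B1inv by decide]; simp [GenSet])
  | one => rw [show emb1 1 = 1 by decide]; exact one_mem _
  | mul x y hx hy ihx ihy => rw [emb1_mul]; exact mul_mem ihx ihy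

lemma emb2_mem {R : Matrix (Fin 2) (Fin 2) ℤ} (hR : R ∈ G2) : emb2 R ∈ G := by
  induction hR using Submonoid.closure_induction with
  | mem x hx =>
      simp only [Gen2, Set.mem_insert_iff, Set.mem_singleton_iff] at hx
      rcases hx with rfl|rfl|rfl|rfl
      · exact Submonoid.subset_closure (show emb2 T2 ∈ GenSet by
          rw [show emb2 T2 = A2 by decide]; simp [GenSet])
      · exact Submonoid.subset_closure (show emb2 T2i ∈ GenSet by
          rw [show emb2 T2i = A2inv by decide]; simp [GenSet])
      · exact Submonoid.subset_closure (show emb2 L2 ∈ GenSet by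
          rw [show emb2 L2 = B2 by decide]; simp [GenSet])
      · exact Submonoid.subset_closure (show emb2 L2i ∈ GenSet by
          rw [show emb2 L2i = B2inv by decide]; simp [GenSet])
  | one => rw [show emb2 1 = 1 by decide]; exact one_mem _
  | mul x y hx hy ihx ihy => rw [emb2_mul]; exact mul_mem ihx ihy

lemma emb1_mulVec (R : Matrix (Fin 2) (Fin 2) ℤ) (a b c d : ℤ) :
    (emb1 R).mulVec ![a, b, c, d] =
      ![R.mulVec ![a, b] 0, R.mulVec ![a, b] 1, c, d] := by
  funext i
  fin_cases i <;>
    simp [emb1, Matrix.mulVec, dotProduct, Fin.sum_univ_four, Fin.sum_univ_two]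

lemma emb2_mulVec (R : Matrix (Fin 2) (Fin 2) ℤ) (a b c d : ℤ) :
    (emb2 R).mulVec ![a, b, c, d] =
      ![a, b, R.mulVec ![c, d] 0, R.mulVec ![c, d] 1] := by
  funext i
  fin_cases i <;>
    simp [emb2, Matrix.mulVec, dotProduct, Fin.sum_univ_four, Fin.sum_univ_two]

/- elementary one-parameter families -/

def zA1k (k : ℤ) : Matrix (Fin 4) (Fin 4) ℤ := !![1,k,0,0; 0,1,0,0; 0,0,1,0; 0,0,0,1]
def zA2k (k : ℤ) : Matrix (Fin 4) (Fin 4) ℤ := !![1,0,0,0; 0,1,0,0; 0,0,1,k; 0,0,0,1]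
def zCk (k : ℤ) : Matrix (Fin 4) (Fin 4) ℤ := !![1,0,0,0; 0,1,0,k; -k,0,1,0; 0,0,0,1]
def zEk (k : ℤ) : Matrix (Fin 4) (Fin 4) ℤ := !![1,-k,0,-k; 0,1,0,0; 0,-k,1,-k; 0,0,0,1]
def W4 : Matrix (Fin 4) (Fin 4) ℤ := !![0,0,1,0; 0,0,0,1; -1,0,0,0; 0,-1,0,0]

lemma zA1k_mem (k : ℤ) : zA1k k ∈ G := by
  induction k using Int.induction_on with
  | zero => rw [show zA1k 0 = 1 by decide]; exact one_mem _
  | succ n ih =>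
      have h : zA1k (n + 1) = zA1k n * A1 := by
        ext i j
        fin_cases i <;> fin_cases j <;>
          (simp [zA1k, A1, Matrix.mul_apply, Fin.sum_univ_four, Matrix.vecHead, Matrix.vecTail]; try ring)
      rw [h]; exact mul_mem ih (Submonoid.subset_closure (by simp [GenSet]))
  | pred n ih =>
      have h : zA1k (-n - 1) = zA1k (-n) * A1inv := by
        ext i j
        fin_cases i <;> fin_cases j <;>
          (simp [zA1k, A1inv, Matrix.mul_apply, Fin.sum_univ_four, Matrix.vecHead, Matrix.vecTail]; try ring)
      rw [h]; exact mul_mem ih (Submonoid.subset_closure (by simp [GenSet]))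

lemma zA2k_mem (k : ℤ) : zA2k k ∈ G := by
  induction k using Int.induction_on with
  | zero => rw [show zA2k 0 = 1 by decide]; exact one_mem _
  | succ n ih =>
      have h : zA2k (n + 1) = zA2k n * A2 := by
        ext i j
        fin_cases i <;> fin_cases j <;>
          (simp [zA2k, A2, Matrix.mul_apply, Fin.sum_univ_four, Matrix.vecHead, Matrix.vecTail]; try ring)
      rw [h]; exact mul_mem ih (Submonoid.subset_closure (by simp [GenSet]))
  | pred n ih =>
      have h : zA2k (-n - 1) = zA2k (-n) * A2inv := by
        ext i j
        fin_cases i <;> fin_cases j <;>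
          (simp [zA2k, A2inv, Matrix.mul_apply, Fin.sum_univ_four, Matrix.vecHead, Matrix.vecTail]; try ring)
      rw [h]; exact mul_mem ih (Submonoid.subset_closure (by simp [GenSet]))

lemma zCk_mem (k : ℤ) : zCk k ∈ G := by
  induction k using Int.induction_on with
  | zero => rw [show zCk 0 = 1 by decide]; exact one_mem _
  | succ n ih =>
      have h : zCk (n + 1) = zCk n * Cmat := by
        ext i j
        fin_cases i <;> fin_cases j <;>
          (simp [zCk, Cmat, Matrix.mul_apply, Fin.sum_univ_four, Matrix.vecHead, Matrix.vecTail]; try ring)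
      rw [h]; exact mul_mem ih (Submonoid.subset_closure (by simp [GenSet]))
  | pred n ih =>
      have h : zCk (-n - 1) = zCk (-n) * Cinv := by
        ext i j
        fin_cases i <;> fin_cases j <;>
          (simp [zCk, Cinv, Matrix.mul_apply, Fin.sum_univ_four, Matrix.vecHead, Matrix.vecTail]; try ring)
      rw [h]; exact mul_mem ih (Submonoid.subset_closure (by simp [GenSet]))

lemma Emix_mem : zEk 1 ∈ G := by
  rw [show zEk 1 = Cinv * A1inv * Cmat by decide]
  exact mul_mem (mul_mem (Submonoid.subset_closure (by simp [GenSet]))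
    (Submonoid.subset_closure (by simp [GenSet]))) (Submonoid.subset_closure (by simp [GenSet]))

lemma EmixI_mem : zEk (-1) ∈ G := by
  rw [show zEk (-1) = Cinv * A1 * Cmat by decide]
  exact mul_mem (mul_mem (Submonoid.subset_closure (by simp [GenSet]))
    (Submonoid.subset_closure (by simp [GenSet]))) (Submonoid.subset_closure (by simp [GenSet]))

lemma zEk_mem (k : ℤ) : zEk k ∈ G := by
  induction k using Int.induction_on with
  | zero => rw [show zEk 0 = 1 by decide]; exact one_mem _
  | succ n ih =>
      have h : zEk (n + 1) = zEk n * zEk 1 := by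
        ext i j
        fin_cases i <;> fin_cases j <;>
          (simp [zEk, Matrix.mul_apply, Fin.sum_univ_four, Matrix.vecHead, Matrix.vecTail]; try ring)
      rw [h]; exact mul_mem ih Emix_mem
  | pred n ih =>
      have h : zEk (-n - 1) = zEk (-n) * zEk (-1) := by
        ext i j
        fin_cases i <;> fin_cases j <;>
          (simp [zEk, Matrix.mul_apply, Fin.sum_univ_four, Matrix.vecHead, Matrix.vecTail]; try ring)
      rw [h]; exact mul_mem ih EmixI_mem

lemma gmem {x : Matrix (Fin 4) (Fin 4) ℤ} (hx : x ∈ GenSet) : x ∈ G :=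
  Submonoid.subset_closure hx

lemma W4_mem : W4 ∈ G := by
  rw [show W4 = B1inv * Cmat * A1 * B2inv * Cmat * A1inv * B2 * Cmat * A2inv * B1 * A1 by decide]
  exact mul_mem (mul_mem (mul_mem (mul_mem (mul_mem (mul_mem (mul_mem (mul_mem (mul_mem
    (mul_mem (gmem (by simp [GenSet])) (gmem (by simp [GenSet]))) (gmem (by simp [GenSet])))
    (gmem (by simp [GenSet]))) (gmem (by simp [GenSet]))) (gmem (by simp [GenSet])))
    (gmem (by simp [GenSet]))) (gmem (by simp [GenSet]))) (gmem (by simp [GenSet])))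
    (gmem (by simp [GenSet]))) (gmem (by simp [GenSet]))

lemma zA1k_mulVec (k a b c d : ℤ) :
    (zA1k k).mulVec ![a, b, c, d] = ![a + k * b, b, c, d] := by
  funext i
  fin_cases i <;> simp [zA1k, Matrix.mulVec, dotProduct, Fin.sum_univ_four]

lemma zA2k_mulVec (k a b c d : ℤ) :
    (zA2k k).mulVec ![a, b, c, d] = ![a, b, c + k * d, d] := by
  funext i
  fin_cases i <;> simp [zA2k, Matrix.mulVec, dotProduct, Fin.sum_univ_four]

lemma zCk_mulVec (k a b c d : ℤ) :
    (zCk k).mulVec ![a, b, c, d] = ![a, b + k * d, c - k * a, d] := by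
  funext i
  fin_cases i <;> (simp [zCk, Matrix.mulVec, dotProduct, Fin.sum_univ_four]; try ring)

lemma zEk_mulVec (k a b c d : ℤ) :
    (zEk k).mulVec ![a, b, c, d] = ![a - k * (b + d), b, c - k * (b + d), d] := by
  funext i
  fin_cases i <;> (simp [zEk, Matrix.mulVec, dotProduct, Fin.sum_univ_four]; try ring)

lemma W4_mulVec (a b c d : ℤ) :
    W4.mulVec ![a, b, c, d] = ![c, d, -a, -b] := by
  funext i
  fin_cases i <;> simp [W4, Matrix.mulVec, dotProduct, Fin.sum_univ_four]

lemma mixEuclid : ∀ n : ℕ, ∀ a c : ℤ, a.natAbs ≤ n →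
    ∃ P ∈ G, P.mulVec ![a, 0, c, 0] = ![(Int.gcd a c : ℤ), 0, 0, 0] := by
  have base : ∀ c : ℤ, ∃ P ∈ G, P.mulVec ![0, 0, c, 0] = ![(Int.gcd 0 c : ℤ), 0, 0, 0] := by
    intro c
    rcases le_or_gt 0 c with h | h
    · refine ⟨W4, W4_mem, ?_⟩
      rw [W4_mulVec]
      have : ((Int.gcd 0 c : ℕ) : ℤ) = c := by rw [Int.gcd_zero_left]; omega
      rw [this]; norm_num
    · refine ⟨W4 * emb2 (-1), mul_mem W4_mem (emb2_mem negone_mem), ?_⟩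
      have h1 : (emb2 (-1)).mulVec ![0, 0, c, 0] = ![0, 0, -c, 0] := by
        funext i
        fin_cases i <;> simp [emb2, Matrix.mulVec, dotProduct, Fin.sum_univ_four,
          Matrix.neg_apply, Matrix.one_apply, Matrix.vecHead, Matrix.vecTail]
      rw [← Matrix.mulVec_mulVec, h1, W4_mulVec]
      have : ((Int.gcd 0 c : ℕ) : ℤ) = -c := by rw [Int.gcd_zero_left]; omega
      rw [this]; norm_num
  intro n
  induction n with
  | zero =>
      intro a c ha
      have : a = 0 := by omega
      subst this; exact base c
  | succ n ih =>
      intro a c ha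
      by_cases ha0 : a = 0
      · subst ha0; exact base c
      · obtain ⟨P, hP, hPv⟩ := ih (c % a) (-a)
          (by have := emod_natAbs_lt c a ha0; omega)
        refine ⟨P * (W4 * zCk (c / a)), mul_mem hP (mul_mem W4_mem (zCk_mem _)), ?_⟩
        rw [← Matrix.mulVec_mulVec, ← Matrix.mulVec_mulVec, zCk_mulVec,
          show (0 : ℤ) + c / a * 0 = 0 by ring,
          show c - c / a * a = c % a by rw [Int.emod_def]; ring,
          W4_mulVec, show -(0:ℤ) = 0 by ring, hPv]
        have : Int.gcd (c % a) (-a) = Int.gcd a c := by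
          rw [gcd_neg_right, Int.gcd_comm, gcd_step]
          exact Int.gcd_comm c a
        rw [this]

end Sp4Aux

namespace Sp4Aux

lemma sp_mul {P N : Matrix (Fin 4) (Fin 4) ℤ}
    (hP : Pᵀ * Omega4 * P = Omega4) (hN : Nᵀ * Omega4 * N = Omega4) :
    (P * N)ᵀ * Omega4 * (P * N) = Omega4 := by
  have h : (P * N)ᵀ * Omega4 * (P * N) = Nᵀ * (Pᵀ * Omega4 * P) * N := by
    rw [transpose_mul]; noncomm_ring
  rw [h, hP, hN]

lemma sp_pair {M : Matrix (Fin 4) (Fin 4) ℤ} (h : Mᵀ * Omega4 * M = Omega4)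
    (j j' : Fin 4) (v : ℤ) (hv : Omega4 j j' = v) :
    M 0 j * M 1 j' - M 1 j * M 0 j' + M 2 j * M 3 j' - M 3 j * M 2 j' = v := by
  have h' := congrFun (congrFun h j) j'
  rw [hv] at h'
  simp only [Matrix.mul_apply, Matrix.transpose_apply, Fin.sum_univ_four] at h'
  norm_num [Omega4, Matrix.cons_val_two, Matrix.cons_val_three, Matrix.cons_val_succ', Matrix.cons_val_zero, Matrix.cons_val_one, Matrix.head_cons,
    Matrix.vecHead, Matrix.vecTail] at h'
  linear_combination h'

def coln (M : Matrix (Fin 4) (Fin 4) ℤ) (j : Fin 4) : Fin 4 → ℤ :=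
  ![M 0 j, M 1 j, M 2 j, M 3 j]

lemma mul_coln (P M : Matrix (Fin 4) (Fin 4) ℤ) (j : Fin 4) :
    coln (P * M) j = P.mulVec (coln M j) := by
  funext i
  fin_cases i <;>
    simp [coln, Matrix.mul_apply, Matrix.mulVec, dotProduct, Fin.sum_univ_four]

lemma coln_ext {M : Matrix (Fin 4) (Fin 4) ℤ} {j : Fin 4} {v0 v1 v2 v3 : ℤ}
    (h : coln M j = ![v0, v1, v2, v3]) :
    M 0 j = v0 ∧ M 1 j = v1 ∧ M 2 j = v2 ∧ M 3 j = v3 := by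
  refine ⟨?_, ?_, ?_, ?_⟩
  · simpa [coln] using congrFun h 0
  · simpa [coln] using congrFun h 1
  · simpa [coln] using congrFun h 2
  · simpa [coln] using congrFun h 3

lemma emb1_mulVec' {R : Matrix (Fin 2) (Fin 2) ℤ} {a b x y : ℤ} (c d : ℤ)
    (h : R.mulVec ![a, b] = ![x, y]) :
    (emb1 R).mulVec ![a, b, c, d] = ![x, y, c, d] := by
  rw [emb1_mulVec, h]
  funext i; fin_cases i <;> norm_num

lemma emb2_mulVec' {R : Matrix (Fin 2) (Fin 2) ℤ} {c d x y : ℤ} (a b : ℤ)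
    (h : R.mulVec ![c, d] = ![x, y]) :
    (emb2 R).mulVec ![a, b, c, d] = ![a, b, x, y] := by
  rw [emb2_mulVec, h]
  funext i; fin_cases i <;> norm_num

lemma mulVec_zero2 (R : Matrix (Fin 2) (Fin 2) ℤ) : R.mulVec ![0, 0] = ![0, 0] := by
  funext i
  fin_cases i <;> simp [Matrix.mulVec, dotProduct, Fin.sum_univ_two]

lemma phase2 (M : Matrix (Fin 4) (Fin 4) ℤ)
    (hsp : Mᵀ * Omega4 * M = Omega4)
    (h00 : M 0 0 = 1) (h10 : M 1 0 = 0) (h20 : M 2 0 = 0) (h30 : M 3 0 = 0) :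
    ∃ Q ∈ G, Q * M = 1 := by
  have e11 : M 1 1 = 1 := by
    have h := sp_pair hsp 0 1 1 (by decide)
    rw [h00, h10, h20, h30] at h; linarith
  obtain ⟨R, hR, hRv⟩ := euclid2 (M 3 1).natAbs (M 2 1) (M 3 1) le_rfl
  set g : ℤ := (Int.gcd (M 2 1) (M 3 1) : ℤ) with hg
  set Ma := zA1k (-(M 0 1)) * M with hMa
  set Mb := emb2 R * Ma with hMb
  set Mc := zA1k g * (zEk g * Mb) with hMc
  have hMacol0 : coln Ma 0 = ![1, 0, 0, 0] := by
    rw [hMa, mul_coln, show coln M 0 = ![M 0 0, M 1 0, M 2 0, M 3 0] from rfl,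
      h00, h10, h20, h30, zA1k_mulVec]
    funext i; fin_cases i <;> norm_num
  have hMacol1 : coln Ma 1 = ![0, 1, M 2 1, M 3 1] := by
    rw [hMa, mul_coln, show coln M 1 = ![M 0 1, M 1 1, M 2 1, M 3 1] from rfl,
      e11, zA1k_mulVec]
    funext i; fin_cases i <;> norm_num
  have hMbcol0 : coln Mb 0 = ![1, 0, 0, 0] := by
    rw [hMb, mul_coln, hMacol0, emb2_mulVec' 1 0 (mulVec_zero2 R)]
  have hMbcol1 : coln Mb 1 = ![0, 1, g, 0] := by
    rw [hMb, mul_coln, hMacol1, emb2_mulVec' 0 1 hRv]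
  have hMccol0 : coln Mc 0 = ![1, 0, 0, 0] := by
    rw [hMc, mul_coln, mul_coln, hMbcol0, zEk_mulVec, zA1k_mulVec]
    funext i; fin_cases i <;> norm_num
  have hMccol1 : coln Mc 1 = ![0, 1, 0, 0] := by
    rw [hMc, mul_coln, mul_coln, hMbcol1, zEk_mulVec, zA1k_mulVec]
    funext i; fin_cases i <;> norm_num
  have spc : Mcᵀ * Omega4 * Mc = Omega4 := by
    rw [hMc, hMb, hMa]
    exact sp_mul (sp_of_mem (zA1k_mem g)) (sp_mul (sp_of_mem (zEk_mem g))
      (sp_mul (sp_of_mem (emb2_mem hR)) (sp_mul (sp_of_mem (zA1k_mem _)) hsp)))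
  obtain ⟨c00, c10, c20, c30⟩ := coln_ext hMccol0
  obtain ⟨c01, c11, c21, c31⟩ := coln_ext hMccol1
  have e02 : Mc 0 2 = 0 := by
    have h := sp_pair spc 1 2 0 (by decide)
    rw [c01, c11, c21, c31] at h; linarith
  have e12 : Mc 1 2 = 0 := by
    have h := sp_pair spc 0 2 0 (by decide)
    rw [c00, c10, c20, c30] at h; linarith
  have e03 : Mc 0 3 = 0 := by
    have h := sp_pair spc 1 3 0 (by decide)
    rw [c01, c11, c21, c31] at h; linarith
  have e13 : Mc 1 3 = 0 := by
    have h := sp_pair spc 0 3 0 (by decide)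
    rw [c00, c10, c20, c30] at h; linarith
  have hdet : Mc 2 2 * Mc 3 3 - Mc 3 2 * Mc 2 3 = 1 := by
    have h := sp_pair spc 2 3 1 (by decide)
    rw [e02, e12, e03, e13] at h; linarith
  have hgcd : Int.gcd (Mc 2 2) (Mc 3 2) = 1 := by
    have hdvd : ((Int.gcd (Mc 2 2) (Mc 3 2) : ℕ) : ℤ) ∣ ((1 : ℕ) : ℤ) := by
      push_cast
      rw [← hdet]
      exact dvd_sub (Dvd.dvd.mul_right (Int.gcd_dvd_left _ _) _)
        (Dvd.dvd.mul_right (Int.gcd_dvd_right _ _) _)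
    exact Nat.dvd_one.mp (Int.natCast_dvd_natCast.mp hdvd)
  obtain ⟨R', hR', hR'v⟩ := euclid2 (Mc 3 2).natAbs (Mc 2 2) (Mc 3 2) le_rfl
  rw [hgcd] at hR'v
  have hR'v1 : R'.mulVec ![Mc 2 2, Mc 3 2] = ![1, 0] := by rw [hR'v]; norm_num
  set Md := emb2 R' * Mc with hMd
  have hMdcol0 : coln Md 0 = ![1, 0, 0, 0] := by
    rw [hMd, mul_coln, hMccol0, emb2_mulVec' 1 0 (mulVec_zero2 R')]
  have hMdcol1 : coln Md 1 = ![0, 1, 0, 0] := by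
    rw [hMd, mul_coln, hMccol1, emb2_mulVec' 0 1 (mulVec_zero2 R')]
  have hMdcol2 : coln Md 2 = ![0, 0, 1, 0] := by
    rw [hMd, mul_coln, show coln Mc 2 = ![Mc 0 2, Mc 1 2, Mc 2 2, Mc 3 2] from rfl,
      e02, e12, emb2_mulVec' 0 0 hR'v1]
  set u : ℤ := R'.mulVec ![Mc 2 3, Mc 3 3] 0 with hu
  set w : ℤ := R'.mulVec ![Mc 2 3, Mc 3 3] 1 with hw
  have hR'v3 : R'.mulVec ![Mc 2 3, Mc 3 3] = ![u, w] := by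
    funext i; fin_cases i <;> simp [hu, hw]
  have hMdcol3 : coln Md 3 = ![0, 0, u, w] := by
    rw [hMd, mul_coln, show coln Mc 3 = ![Mc 0 3, Mc 1 3, Mc 2 3, Mc 3 3] from rfl,
      e03, e13, emb2_mulVec' 0 0 hR'v3]
  have spd : Mdᵀ * Omega4 * Md = Omega4 := by
    rw [hMd]
    exact sp_mul (sp_of_mem (emb2_mem hR')) spc
  obtain ⟨d02, d12, d22, d32⟩ := coln_ext hMdcol2
  obtain ⟨d03, d13, d23, d33⟩ := coln_ext hMdcol3
  have hw1 : w = 1 := by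
    have h := sp_pair spd 2 3 1 (by decide)
    rw [d02, d12, d22, d32, d03, d13, d23, d33] at h; linarith
  set Me := zA2k (-u) * Md with hMe
  have hMecol0 : coln Me 0 = ![1, 0, 0, 0] := by
    rw [hMe, mul_coln, hMdcol0, zA2k_mulVec]
    funext i; fin_cases i <;> norm_num
  have hMecol1 : coln Me 1 = ![0, 1, 0, 0] := by
    rw [hMe, mul_coln, hMdcol1, zA2k_mulVec]
    funext i; fin_cases i <;> norm_num
  have hMecol2 : coln Me 2 = ![0, 0, 1, 0] := by
    rw [hMe, mul_coln, hMdcol2, zA2k_mulVec]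
    funext i; fin_cases i <;> norm_num
  have hMecol3 : coln Me 3 = ![0, 0, 0, 1] := by
    rw [hMe, mul_coln, hMdcol3, hw1, zA2k_mulVec]
    funext i; fin_cases i <;> norm_num
  obtain ⟨f00, f10, f20, f30⟩ := coln_ext hMecol0
  obtain ⟨f01, f11, f21, f31⟩ := coln_ext hMecol1
  obtain ⟨f02, f12, f22, f32⟩ := coln_ext hMecol2
  obtain ⟨f03, f13, f23, f33⟩ := coln_ext hMecol3
  have hMe1 : Me = 1 := by
    ext i j
    fin_cases i <;> fin_cases j <;>
      simp [f00, f10, f20, f30, f01, f11, f21, f31, f02, f12, f22, f32,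
        f03, f13, f23, f33, Matrix.one_apply]
  refine ⟨zA2k (-u) * (emb2 R' * (zA1k g * (zEk g * (emb2 R * zA1k (-(M 0 1)))))), ?_, ?_⟩
  · exact mul_mem (zA2k_mem _) (mul_mem (emb2_mem hR') (mul_mem (zA1k_mem _)
      (mul_mem (zEk_mem _) (mul_mem (emb2_mem hR) (zA1k_mem _)))))
  · have hassoc : zA2k (-u) * (emb2 R' * (zA1k g * (zEk g * (emb2 R * zA1k (-(M 0 1)))))) * M
        = Me := by
      rw [hMe, hMd, hMc, hMb, hMa]; simp only [Matrix.mul_assoc]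
    rw [hassoc, hMe1]

lemma mem_of_sp {M : Matrix (Fin 4) (Fin 4) ℤ}
    (hsp : Mᵀ * Omega4 * M = Omega4) : M ∈ G := by
  obtain ⟨R1, hR1, hR1v⟩ := euclid2 (M 1 0).natAbs (M 0 0) (M 1 0) le_rfl
  obtain ⟨R2, hR2, hR2v⟩ := euclid2 (M 3 0).natAbs (M 2 0) (M 3 0) le_rfl
  obtain ⟨P3, hP3, hP3v⟩ := mixEuclid (Int.gcd (M 0 0) (M 1 0))
    ((Int.gcd (M 0 0) (M 1 0) : ℤ)) ((Int.gcd (M 2 0) (M 3 0) : ℤ)) (by simp)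
  have hcomb := sp_pair hsp 0 1 1 (by decide)
  have hgg : Int.gcd ((Int.gcd (M 0 0) (M 1 0) : ℤ)) ((Int.gcd (M 2 0) (M 3 0) : ℤ)) = 1 := by
    have d1 : ((Int.gcd ((Int.gcd (M 0 0) (M 1 0) : ℤ)) ((Int.gcd (M 2 0) (M 3 0) : ℤ)) : ℕ) : ℤ)
        ∣ M 0 0 := dvd_trans (Int.gcd_dvd_left _ _) (Int.gcd_dvd_left _ _)
    have d2 : ((Int.gcd ((Int.gcd (M 0 0) (M 1 0) : ℤ)) ((Int.gcd (M 2 0) (M 3 0) : ℤ)) : ℕ) : ℤ)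
        ∣ M 1 0 := dvd_trans (Int.gcd_dvd_left _ _) (Int.gcd_dvd_right _ _)
    have d3 : ((Int.gcd ((Int.gcd (M 0 0) (M 1 0) : ℤ)) ((Int.gcd (M 2 0) (M 3 0) : ℤ)) : ℕ) : ℤ)
        ∣ M 2 0 := dvd_trans (Int.gcd_dvd_right _ _) (Int.gcd_dvd_left _ _)
    have d4 : ((Int.gcd ((Int.gcd (M 0 0) (M 1 0) : ℤ)) ((Int.gcd (M 2 0) (M 3 0) : ℤ)) : ℕ) : ℤ)
        ∣ M 3 0 := dvd_trans (Int.gcd_dvd_right _ _) (Int.gcd_dvd_right _ _)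
    have hdvd : ((Int.gcd ((Int.gcd (M 0 0) (M 1 0) : ℤ)) ((Int.gcd (M 2 0) (M 3 0) : ℤ)) : ℕ) : ℤ)
        ∣ ((1 : ℕ) : ℤ) := by
      push_cast
      rw [← hcomb]
      exact dvd_sub (dvd_add (dvd_sub (Dvd.dvd.mul_right d1 _) (Dvd.dvd.mul_right d2 _))
        (Dvd.dvd.mul_right d3 _)) (Dvd.dvd.mul_right d4 _)
    exact Nat.dvd_one.mp (Int.natCast_dvd_natCast.mp hdvd)
  have hPmem : P3 * (emb2 R2 * emb1 R1) ∈ G :=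
    mul_mem hP3 (mul_mem (emb2_mem hR2) (emb1_mem hR1))
  have hcol : (P3 * (emb2 R2 * emb1 R1)).mulVec ![M 0 0, M 1 0, M 2 0, M 3 0] = ![1, 0, 0, 0] := by
    rw [← Matrix.mulVec_mulVec, ← Matrix.mulVec_mulVec, emb1_mulVec' (M 2 0) (M 3 0) hR1v,
      emb2_mulVec' _ _ hR2v, hP3v, hgg]
    funext i; fin_cases i <;> norm_num
  have hcoln : coln (P3 * (emb2 R2 * emb1 R1) * M) 0 = ![1, 0, 0, 0] := by
    rw [mul_coln, show coln M 0 = ![M 0 0, M 1 0, M 2 0, M 3 0] from rfl, hcol]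
  obtain ⟨z0, z1, z2, z3⟩ := coln_ext hcoln
  obtain ⟨Q, hQ, hQM⟩ := phase2 (P3 * (emb2 R2 * emb1 R1) * M)
    (sp_mul (sp_of_mem hPmem) hsp) z0 z1 z2 z3
  have hfin : (Q * (P3 * (emb2 R2 * emb1 R1))) * M = 1 := by
    rw [mul_assoc]; exact hQM
  obtain ⟨N, hN, hN1, hN2⟩ := exists_inv (mul_mem hQ hPmem)
  have hMN : M = N := by
    calc M = 1 * M := (one_mul M).symm
    _ = (N * (Q * (P3 * (emb2 R2 * emb1 R1)))) * M := by rw [hN1]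
    _ = N * ((Q * (P3 * (emb2 R2 * emb1 R1))) * M) := by rw [mul_assoc]
    _ = N := by rw [hfin, mul_one]
  rw [hMN]; exact hN

end Sp4Aux

/-- The matrices `A₁, B₁, A₂, B₂, C` and their inverses generate `Sp₄(ℤ)`:
every matrix in the multiplicative closure of these ten matrices is symplectic
for `Ω = diag(J, J)`, and conversely every `Ω`-symplectic integer matrix is
a product of these matrices. -/
theorem generators_of_Sp4 :
    (Submonoid.closure
        ({A1, A1inv, B1, B1inv, A2, A2inv, B2, B2inv, Cmat, Cinv} :
          Set (Matrix (Fin 4) (Fin 4) ℤ)) : Set (Matrix (Fin 4) (Fin 4) ℤ)) =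
      {M : Matrix (Fin 4) (Fin 4) ℤ | Mᵀ * Omega4 * M = Omega4} := by
  ext M
  simp only [SetLike.mem_coe, Set.mem_setOf_eq]
  constructor
  · intro h
    exact Sp4Aux.sp_of_mem h
  · intro h
    exact Sp4Aux.mem_of_sp h
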